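/- arXiv:2109.02016 — 5 statements merged into one kernel-verified Lean document; each statement's English description precedes it below -/
import Mathlib

section
/- (Decomposition-based zonotope bundle propagation, core inclusion.) Let Z ⊆ ℝ^{n_z} be an intersection of zonotopes Z = ⋂_{s=1}^S {G_s, c_s}_Z, and let f : ℝ^{n_z} → ℝ^{n_x}. For each s, suppose there exist H_s ∈ ℝ^{n_x × n_s} and vectors g̲^s ≤ ḡ^s in ℝ^{n_x} such that f(G_s ξ + c_s) − H_s ξ ∈ [g̲^s, ḡ^s] for all ξ ∈ B∞^{n_s}. Then f(Z) ⊆ ⋂_{s=1}^S {[H_s (1/2)diag(ḡ^s − g̲^s)], (1/2)(ḡ^s + g̲^s)}_Z. -/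
/-! On the `s`-th generator set, `f (G s ξ + c s) = H s ξ + r` with `r` in the box
`[glo s, ghi s]`, and a box is the zonotope with centre its midpoint and diagonal generator
matrix its half-widths; reusing `ξ` for the `H s` generators places `f z` in the `s`-th
output zonotope. -/

lemma exists_abs_le_one_eq_mul_of_abs_le {x a : ℝ} (h : |x| ≤ a) :
    ∃ θ : ℝ, |θ| ≤ 1 ∧ x = a * θ := by
  rcases ((abs_nonneg x).trans h).eq_or_lt with rfl | ha
  · exact ⟨0, by simp, by simpa using h⟩
  · refine ⟨x / a, ?_, by field_simp⟩
    rw [abs_div, abs_of_pos ha]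
    exact div_le_one_of_le₀ h ha.le

lemma exists_abs_le_one_eq_midpoint_add_of_mem_Icc {lo hi r : ℝ} (h : r ∈ Set.Icc lo hi) :
    ∃ θ : ℝ, |θ| ≤ 1 ∧ r = 1 / 2 * (hi - lo) * θ + 1 / 2 * (hi + lo) := by
  have hdev : |r - (hi + lo) / 2| ≤ (hi - lo) / 2 :=
    abs_sub_le_iff.2 ⟨by linarith [h.2], by linarith [h.1]⟩
  obtain ⟨θ, hθ, hr⟩ := exists_abs_le_one_eq_mul_of_abs_le hdev
  exact ⟨θ, hθ, by linear_combination hr⟩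

lemma Pi.exists_abs_le_one_eq_midpoint_add_of_le {ι : Type*} {lo hi r : ι → ℝ}
    (hlo : lo ≤ r) (hhi : r ≤ hi) :
    ∃ θ : ι → ℝ, (∀ i, |θ i| ≤ 1) ∧
      r = fun i => 1 / 2 * (hi i - lo i) * θ i + 1 / 2 * (hi i + lo i) := by
  choose θ hθ hr using fun i =>
    exists_abs_le_one_eq_midpoint_add_of_mem_Icc
      (show r i ∈ Set.Icc (lo i) (hi i) from ⟨hlo i, hhi i⟩)
  exact ⟨θ, hθ, funext hr⟩

theorem zb_propagation_general (nz nx S : ℕ) (ns : Fin S → ℕ)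
    (G : (s : Fin S) → Matrix (Fin nz) (Fin (ns s)) ℝ) (c : Fin S → Fin nz → ℝ)
    (f : (Fin nz → ℝ) → (Fin nx → ℝ))
    (H : (s : Fin S) → Matrix (Fin nx) (Fin (ns s)) ℝ)
    (glo ghi : Fin S → Fin nx → ℝ)
    (hbound : ∀ s : Fin S, ∀ ξ : Fin (ns s) → ℝ, (∀ i, |ξ i| ≤ 1) →
      glo s ≤ f ((G s).mulVec ξ + c s) - (H s).mulVec ξ ∧
      f ((G s).mulVec ξ + c s) - (H s).mulVec ξ ≤ ghi s) :
    f '' (⋂ s : Fin S,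
        {z | ∃ ξ : Fin (ns s) → ℝ, (∀ i, |ξ i| ≤ 1) ∧ z = (G s).mulVec ξ + c s}) ⊆
      ⋂ s : Fin S, {y : Fin nx → ℝ |
        ∃ ξ : Fin (ns s) → ℝ, (∀ i, |ξ i| ≤ 1) ∧
        ∃ θ : Fin nx → ℝ, (∀ i, |θ i| ≤ 1) ∧
        y = fun i => ((H s).mulVec ξ) i + (1 / 2) * (ghi s i - glo s i) * θ i
              + (1 / 2) * (ghi s i + glo s i)} := by
  rintro _ ⟨z, hz, rfl⟩
  simp only [Set.mem_iInter, Set.mem_ofPred_eq] at hz ⊢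
  intro s
  obtain ⟨ξ, hξ, rfl⟩ := hz s
  obtain ⟨hlo, hhi⟩ := hbound s ξ hξ
  obtain ⟨θ, hθ, hr⟩ := Pi.exists_abs_le_one_eq_midpoint_add_of_le hlo hhi
  refine ⟨ξ, hξ, θ, hθ, funext fun i => ?_⟩
  have hri := congrFun hr i
  simp only [Pi.sub_apply] at hri
  linarith

/-- decomposition-based zonotope-bundle propagation. -/
theorem zb_propagation (nz nx S : ℕ) (ns : Fin S → ℕ)
    (G : (s : Fin S) → Matrix (Fin nz) (Fin (ns s)) ℝ) (c : Fin S → Fin nz → ℝ)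
    (f : (Fin nz → ℝ) → (Fin nx → ℝ))
    (H : (s : Fin S) → Matrix (Fin nx) (Fin (ns s)) ℝ)
    (glo ghi : Fin S → Fin nx → ℝ)
    (hle : ∀ s, glo s ≤ ghi s)
    (hbound : ∀ s : Fin S, ∀ ξ : Fin (ns s) → ℝ, (∀ i, |ξ i| ≤ 1) →
      glo s ≤ f ((G s).mulVec ξ + c s) - (H s).mulVec ξ ∧
      f ((G s).mulVec ξ + c s) - (H s).mulVec ξ ≤ ghi s) :
    f '' (⋂ s : Fin S,
        {z | ∃ ξ : Fin (ns s) → ℝ, (∀ i, |ξ i| ≤ 1) ∧ z = (G s).mulVec ξ + c s}) ⊆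
      ⋂ s : Fin S, {y : Fin nx → ℝ |
        ∃ ξ : Fin (ns s) → ℝ, (∀ i, |ξ i| ≤ 1) ∧
        ∃ θ : Fin nx → ℝ, (∀ i, |θ i| ≤ 1) ∧
        y = fun i => ((H s).mulVec ξ) i + (1 / 2) * (ghi s i - glo s i) * θ i
              + (1 / 2) * (ghi s i + glo s i)} :=
  zb_propagation_general nz nx S ns G c f H glo ghi hbound
end

section
/- (Decomposition-based update, zonotope case, single constraint pair.) Let Z_f = {G_f α + c_f : α ∈ B∞^{n_r}} ⊆ ℝ^{n_x} be a zonotope, Z_μ = {G_μ ζ + c_μ : ζ ∈ B∞^{n_t}} ⊆ ℝ^{n_μ} a zonotope, and μ : ℝ^{n_x} → ℝ^{n_μ}. Suppose there exist Q ∈ ℝ^{n_μ × n_r} and p̲ ≤ p̄ ∈ ℝ^{n_μ} such that μ(G_f α + c_f) − Qα ∈ [p̲, p̄] for all α ∈ B∞^{n_r}. Then the generalized intersection {x ∈ Z_f : μ(x) ∈ Z_μ} is contained in the constrained zonotope {[G_f 0], c_f, [Q −G_μ (1/2)diag(p̄ − p̲)], c_μ − (1/2)(p̄ + p̲)}_{CZ},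 i.e., the set {G_f α + c_f : ∃ζ ∈ B∞^{n_t}, θ ∈ B∞^{n_μ}, α ∈ B∞^{n_r}, Qα − G_μ ζ + (1/2)diag(p̄ − p̲)θ = c_μ − (1/2)(p̄ + p̲)}. -/
/-! The defect `μ(G_f α + c_f) - Qα` lies in the box `[p̲, p̄]`, so each of its coordinates is
the centre of its interval plus the radius times some `θᵢ ∈ [-1, 1]`. Substituting this into
`μ(x) = G_μ ζ + c_μ` gives the linear constraint of the constrained zonotope. -/

theorem Real.exists_abs_le_one_eq_mid_add_rad_mul {a b v : ℝ} (hav : a ≤ v) (hvb : v ≤ b) :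
    ∃ θ : ℝ, |θ| ≤ 1 ∧ v = 1 / 2 * (b + a) + 1 / 2 * (b - a) * θ := by
  obtain rfl | hab := (hav.trans hvb).eq_or_lt
  · exact ⟨0, by simp, by linarith [le_antisymm hvb hav]⟩
  · have hrad : 0 < b - a := sub_pos.2 hab
    refine ⟨(2 * v - a - b) / (b - a), ?_, ?_⟩
    · rw [abs_div, abs_of_pos hrad, div_le_one hrad, abs_le]
      constructor <;> linarith
    · field_simp
      ring

theorem exists_unit_box_eq_mid_add_rad_mul {ι : Type*} {lo hi p : ι → ℝ}
    (hp : p ∈ Set.Icc lo hi) :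
    ∃ θ : ι → ℝ, (∀ i, |θ i| ≤ 1) ∧
      ∀ i, p i = 1 / 2 * (hi i + lo i) + 1 / 2 * (hi i - lo i) * θ i := by
  choose θ hθ hpθ using fun i => Real.exists_abs_le_one_eq_mid_add_rad_mul (hp.1 i) (hp.2 i)
  exact ⟨θ, hθ, hpθ⟩

theorem zb_update_general (nx nmu nr nt : ℕ)
    (Gf : Matrix (Fin nx) (Fin nr) ℝ) (cf : Fin nx → ℝ)
    (Gmu : Matrix (Fin nmu) (Fin nt) ℝ) (cmu : Fin nmu → ℝ)
    (mu : (Fin nx → ℝ) → (Fin nmu → ℝ))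
    (Q : Matrix (Fin nmu) (Fin nr) ℝ) (plo phi : Fin nmu → ℝ)
    (hbound : ∀ α : Fin nr → ℝ, (∀ i, |α i| ≤ 1) →
      plo ≤ mu (Gf.mulVec α + cf) - Q.mulVec α ∧
      mu (Gf.mulVec α + cf) - Q.mulVec α ≤ phi) :
    {x | (∃ α : Fin nr → ℝ, (∀ i, |α i| ≤ 1) ∧ x = Gf.mulVec α + cf) ∧
         (∃ ζ : Fin nt → ℝ, (∀ i, |ζ i| ≤ 1) ∧ mu x = Gmu.mulVec ζ + cmu)} ⊆
      {x : Fin nx → ℝ | ∃ α : Fin nr → ℝ, (∀ i, |α i| ≤ 1) ∧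
        ∃ ζ : Fin nt → ℝ, (∀ i, |ζ i| ≤ 1) ∧
        ∃ θ : Fin nmu → ℝ, (∀ i, |θ i| ≤ 1) ∧
        x = Gf.mulVec α + cf ∧
        (fun i => (Q.mulVec α) i - (Gmu.mulVec ζ) i
            + (1 / 2) * (phi i - plo i) * θ i)
          = fun i => cmu i - (1 / 2) * (phi i + plo i)} := by
  rintro x ⟨⟨α, hα, rfl⟩, ζ, hζ, hmu⟩
  obtain ⟨θ, hθ, hdefect⟩ := exists_unit_box_eq_mid_add_rad_mul (hbound α hα)
  refine ⟨α, hα, ζ, hζ, θ, hθ, rfl, funext fun i => ?_⟩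
  have hdefect_i := hdefect i
  have hmu_i := congrFun hmu i
  simp only [Pi.sub_apply, Pi.add_apply] at hdefect_i hmu_i
  linarith

/-- decomposition-based update, zonotope case: the generalized
intersection {x ∈ Z_f : μ(x) ∈ Z_μ} is contained in a constrained zonotope. -/
theorem zb_update (nx nmu nr nt : ℕ)
    (Gf : Matrix (Fin nx) (Fin nr) ℝ) (cf : Fin nx → ℝ)
    (Gmu : Matrix (Fin nmu) (Fin nt) ℝ) (cmu : Fin nmu → ℝ)
    (mu : (Fin nx → ℝ) → (Fin nmu → ℝ))
    (Q : Matrix (Fin nmu) (Fin nr) ℝ) (plo phi : Fin nmu → ℝ) (hle : plo ≤ phi)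
    (hbound : ∀ α : Fin nr → ℝ, (∀ i, |α i| ≤ 1) →
      plo ≤ mu (Gf.mulVec α + cf) - Q.mulVec α ∧
      mu (Gf.mulVec α + cf) - Q.mulVec α ≤ phi) :
    {x | (∃ α : Fin nr → ℝ, (∀ i, |α i| ≤ 1) ∧ x = Gf.mulVec α + cf) ∧
         (∃ ζ : Fin nt → ℝ, (∀ i, |ζ i| ≤ 1) ∧ mu x = Gmu.mulVec ζ + cmu)} ⊆
      {x : Fin nx → ℝ | ∃ α : Fin nr → ℝ, (∀ i, |α i| ≤ 1) ∧
        ∃ ζ : Fin nt → ℝ, (∀ i, |ζ i| ≤ 1) ∧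
        ∃ θ : Fin nmu → ℝ, (∀ i, |θ i| ≤ 1) ∧
        x = Gf.mulVec α + cf ∧
        (fun i => (Q.mulVec α) i - (Gmu.mulVec ζ) i
            + (1 / 2) * (phi i - plo i) * θ i)
          = fun i => cmu i - (1 / 2) * (phi i + plo i)} :=
  zb_update_general nx nmu nr nt Gf cf Gmu cmu mu Q plo phi hbound
end

section
/- (Mean value extension for propagation, Theorem 2 of Rego et al.) Let f : ℝⁿ × ℝ^{n_w} → ℝⁿ be continuously differentiable in its first argument, X ⊆ ℝⁿ and W ⊆ ℝ^{n_w} sets, and h ∈ X. Suppose Z ⊆ ℝⁿ satisfies f(h, W) ⊆ Z, and 𝕁 is an interval matrix with ∇ₓᵀf(x, w) ∈ 𝕁 for all x ∈ X, w ∈ W (where X is convex). Then f(X, W) ⊆ Z ⊕ {J(x − h) : J ∈ 𝕁, x ∈ X}. -/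
/-! The scalar mean value theorem, applied to each component `fᵢ(·, w)` along the segment
`[h, x] ⊆ X`, gives a point `ξᵢ` of the segment with `fᵢ(x, w) - fᵢ(h, w) = ∇fᵢ(ξᵢ, w) · (x - h)`.
The matrix whose `i`-th row is `∇fᵢ(ξᵢ, w)` then lies in `𝕁`, because `𝕁` is a box, so its rows
can be checked separately and each is a row of a Jacobian at a point of `X`.
It maps `x - h` to `f(x, w) - f(h, w)`, so `z = f(h, w) ∈ Z` does the rest. -/

open Matrix

theorem Convex.exists_mem_segment_sub_apply_eq_fderiv {ι E : Type*} [NormedAddCommGroup E]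
    [NormedSpace ℝ E] {F : E → ι → ℝ} {s : Set E} (hs : Convex ℝ s)
    (hF : ∀ z ∈ s, DifferentiableAt ℝ F z) {x y : E} (hx : x ∈ s) (hy : y ∈ s) (i : ι) :
    ∃ ξ ∈ segment ℝ x y, F y i - F x i = fderiv ℝ F ξ (y - x) i :=
  domain_mvt (f := fun z => F z i)
    (fun z hz => (hasFDerivAt_pi'.1 (hF z hz).hasFDerivAt i).hasFDerivWithinAt)
    hs hx hy

theorem Matrix.mulVec_of_rowwise_apply {R m n : Type*} [CommSemiring R] [Fintype n]
    [DecidableEq n] (L : m → (n → R) →ₗ[R] (m → R)) (v : n → R) (i : m) :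
    ((of fun i j => L i (Pi.single j 1) i) *ᵥ v) i = L i v i := by
  have := congrFun (LinearMap.toMatrix'_mulVec (L i) v) i
  simpa only [mulVec, dotProduct, LinearMap.toMatrix'_apply, of_apply] using this

/-- mean value extension for propagation (Rego et al., Theorem 2):
f(X, W) ⊆ Z ⊕ {J(x - h) : J ∈ 𝕁, x ∈ X}. -/
theorem mean_value_extension_propagation (n nw : ℕ)
    (f : (Fin n → ℝ) → (Fin nw → ℝ) → (Fin n → ℝ))
    (X : Set (Fin n → ℝ)) (hXconv : Convex ℝ X) (W : Set (Fin nw → ℝ))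
    (h : Fin n → ℝ) (hh : h ∈ X)
    (hf : ∀ w ∈ W, ContDiff ℝ 1 (fun x => f x w))
    (Jlo Jhi : Matrix (Fin n) (Fin n) ℝ)
    (hJ : ∀ x ∈ X, ∀ w ∈ W, ∀ i j,
      Jlo i j ≤ fderiv ℝ (fun x => f x w) x (Pi.single j 1) i ∧
      fderiv ℝ (fun x => f x w) x (Pi.single j 1) i ≤ Jhi i j)
    (Z : Set (Fin n → ℝ)) (hZ : ∀ w ∈ W, f h w ∈ Z) :
    ∀ x ∈ X, ∀ w ∈ W, ∃ z ∈ Z, ∃ J : Matrix (Fin n) (Fin n) ℝ,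
      (∀ i j, Jlo i j ≤ J i j ∧ J i j ≤ Jhi i j) ∧ ∃ x' ∈ X,
      f x w = z + J.mulVec (x' - h) := by
  intro x hx w hw
  have hdiff : ∀ y ∈ X, DifferentiableAt ℝ (fun y => f y w) y :=
    fun y _ => (hf w hw).differentiable one_ne_zero y
  choose ξ hξ hmvt using hXconv.exists_mem_segment_sub_apply_eq_fderiv hdiff hh hx
  refine ⟨f h w, hZ w hw, of fun i j => fderiv ℝ (fun y => f y w) (ξ i) (Pi.single j 1) i,
    fun i j => hJ (ξ i) (hXconv.segment_subset hh hx (hξ i)) w hw i j, x, hx, ?_⟩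
  funext i
  have hrow := Matrix.mulVec_of_rowwise_apply
    (fun i => (fderiv ℝ (fun y => f y w) (ξ i)).toLinearMap) (x - h) i
  simp only [ContinuousLinearMap.coe_coe] at hrow
  rw [Pi.add_apply, hrow, ← hmvt i]
  ring
end

section
/- (Mean value extension for the update step with nonlinear observations, core inclusion of Lemma 4.) Let μ : ℝ^{n_x} → ℝ^{n_μ} be continuously differentiable, let X ⊆ ℝ^{n_x} be convex, x₀ ∈ X, and let 𝕁^μ be an interval matrix with ∇ᵀμ(x) ∈ 𝕁^μ for all x ∈ X. Then for every x ∈ X, μ(x) ∈ μ(x₀) ⊕ mid(𝕁^μ)(X ⊖ x₀) ⊕ 𝕁^μ_Δ(X ⊖ x₀), where 𝕁^μ_Δ is the centered interval matrix with [𝕁^μ_Δ]_{ij} = (1/2)[−diam(𝕁^μ)_{ij}, diam(𝕁^μ)_{ij}], X ⊖ x₀ = {x − x₀ : x ∈ X}, and 𝕁^μ_Δ(S) = {Jx : J ∈ 𝕁^μ_Δ, x ∈ S}. Consequently, if Y ⊆ ℝ^{n_μ} and R ⊇ 𝕁^μ_Δ(X ⊖ x₀), then {x ∈ X : μ(x)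 ∈ Y} ⊆ {x ∈ X : ∃y ∈ Y, ∃r ∈ R, y = μ(x₀) + mid(𝕁^μ)(x − x₀) + r}. -/
/-!
Applying the scalar mean value theorem to each coordinate `μᵢ` along the segment `[x₀, x]`
gives `μ(x) - μ(x₀) = J (x - x₀)`, where row `i` of `J` is the row `i` of the Jacobian at some
point `zᵢ` of the segment. By convexity every `zᵢ` lies in `X`, so `J ∈ 𝕁^μ` entrywise, and
`J = mid 𝕁^μ + Δ` with `Δ ∈ 𝕁^μ_Δ`.
-/

open Set Matrix

theorem exists_sub_eq_mulVec_rowwise_fderiv {m n : Type*} [Fintype m] [Fintype n] [DecidableEq n]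
    {f : (n → ℝ) → m → ℝ} (hf : Differentiable ℝ f) (x y : n → ℝ) :
    ∃ z : m → n → ℝ, (∀ i, z i ∈ segment ℝ x y) ∧
      f y - f x = (of fun i j => fderiv ℝ f (z i) (Pi.single j 1) i) *ᵥ (y - x) := by
  have hrow : ∀ i, ∃ z ∈ segment ℝ x y, f y i - f x i = fderiv ℝ f z (y - x) i := fun i =>
    domain_mvt (f := fun v => f v i)
      (f' := fun v => (ContinuousLinearMap.proj i).comp (fderiv ℝ f v))
      (fun v _ => (hasFDerivAt_pi'.1 (hf v).hasFDerivAt i).hasFDerivWithinAt)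
      convex_univ trivial trivial
  choose z hz hsub using hrow
  refine ⟨z, hz, funext fun i => ?_⟩
  have hmatrix : ((of fun i j => fderiv ℝ f (z i) (Pi.single j 1) i) *ᵥ (y - x)) i =
      (LinearMap.toMatrix' (fderiv ℝ f (z i) : (n → ℝ) →ₗ[ℝ] m → ℝ) *ᵥ (y - x)) i := by
    simp [mulVec, dotProduct, LinearMap.toMatrix'_apply]
  rw [Pi.sub_apply, hsub i, hmatrix, LinearMap.toMatrix'_mulVec]
  rfl

theorem Matrix.exists_eq_mid_add_of_mem_Icc {m n : Type*} {A lo hi : Matrix m n ℝ}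
    (hA : ∀ i j, A i j ∈ Icc (lo i j) (hi i j)) :
    ∃ Δ : Matrix m n ℝ, (∀ i j, |Δ i j| ≤ 1 / 2 * (hi i j - lo i j)) ∧
      A = (of fun i j => (hi i j + lo i j) / 2) + Δ := by
  refine ⟨A - of fun i j => (hi i j + lo i j) / 2, fun i j => ?_, by abel⟩
  obtain ⟨hlo, hhi⟩ := hA i j
  rw [sub_apply, of_apply, abs_le]
  constructor <;> linarith

theorem Convex.exists_eq_add_mid_mulVec_add_mulVec {m n : Type*} [Fintype m] [Fintype n]
    [DecidableEq n] {f : (n → ℝ) → m → ℝ} (hf : Differentiable ℝ f) {X : Set (n → ℝ)}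
    (hX : Convex ℝ X) {x₀ x : n → ℝ} (hx₀ : x₀ ∈ X) (hx : x ∈ X) {lo hi : Matrix m n ℝ}
    (hJ : ∀ z ∈ X, ∀ i j,
      lo i j ≤ fderiv ℝ f z (Pi.single j 1) i ∧ fderiv ℝ f z (Pi.single j 1) i ≤ hi i j) :
    ∃ Δ : Matrix m n ℝ, (∀ i j, |Δ i j| ≤ 1 / 2 * (hi i j - lo i j)) ∧
      f x = f x₀ + (of fun i j => (hi i j + lo i j) / 2) *ᵥ (x - x₀) + Δ *ᵥ (x - x₀) := by
  obtain ⟨z, hz, hsub⟩ := exists_sub_eq_mulVec_rowwise_fderiv hf x₀ x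
  obtain ⟨Δ, hΔ, hJ_eq⟩ := exists_eq_mid_add_of_mem_Icc fun i j =>
    hJ (z i) (hX.segment_subset hx₀ hx (hz i)) i j
  refine ⟨Δ, hΔ, ?_⟩
  rw [add_assoc, ← add_mulVec, ← hJ_eq]
  exact eq_add_of_sub_eq' hsub

/-- mean value extension for the update step with nonlinear
observations (core inclusion of Lemma 4). -/
theorem mean_value_extension_update (nx nmu : ℕ)
    (mu : (Fin nx → ℝ) → (Fin nmu → ℝ)) (hmu : ContDiff ℝ 1 mu)
    (X : Set (Fin nx → ℝ)) (hXconv : Convex ℝ X) (x0 : Fin nx → ℝ) (hx0 : x0 ∈ X)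
    (Jlo Jhi : Matrix (Fin nmu) (Fin nx) ℝ)
    (hJ : ∀ x ∈ X, ∀ i j,
      Jlo i j ≤ fderiv ℝ mu x (Pi.single j 1) i ∧
      fderiv ℝ mu x (Pi.single j 1) i ≤ Jhi i j) :
    (∀ x ∈ X, ∃ x1 ∈ X, ∃ x2 ∈ X, ∃ Δ : Matrix (Fin nmu) (Fin nx) ℝ,
      (∀ i j, |Δ i j| ≤ (1 / 2) * (Jhi i j - Jlo i j)) ∧
      mu x = mu x0
        + (Matrix.of fun i j => (Jhi i j + Jlo i j) / 2).mulVec (x1 - x0)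
        + Δ.mulVec (x2 - x0)) ∧
    (∀ Y : Set (Fin nmu → ℝ), ∀ R : Set (Fin nmu → ℝ),
      {r | ∃ Δ : Matrix (Fin nmu) (Fin nx) ℝ,
          (∀ i j, |Δ i j| ≤ (1 / 2) * (Jhi i j - Jlo i j)) ∧
          ∃ x ∈ X, r = Δ.mulVec (x - x0)} ⊆ R →
      {x ∈ X | mu x ∈ Y} ⊆
        {x ∈ X | ∃ y ∈ Y, ∃ r ∈ R,
          y = mu x0
            + (Matrix.of fun i j => (Jhi i j + Jlo i j) / 2).mulVec (x - x0)
            + r}) := by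
  have hext := fun x (hx : x ∈ X) =>
    hXconv.exists_eq_add_mid_mulVec_add_mulVec (hmu.differentiable one_ne_zero) hx0 hx hJ
  refine ⟨fun x hx => ?_, fun Y R hR x ⟨hx, hxY⟩ => ?_⟩
  · obtain ⟨Δ, hΔ, heq⟩ := hext x hx
    exact ⟨x, hx, x, hx, Δ, hΔ, heq⟩
  · obtain ⟨Δ, hΔ, heq⟩ := hext x hx
    exact ⟨hx, mu x, hxY, Δ *ᵥ (x - x0), hR ⟨Δ, hΔ, x, hx, rfl⟩, heq⟩
end

section
/- (One-dimensional remainder-form decomposition gives valid bounds.) Let f : [z̲, z̄] ⊆ ℝⁿ → ℝ be differentiable with gradient bounds J̲ ≤ ∇f ≤ J̄ on the box. Fix m ∈ ℝⁿ with each m_j ∈ {max(J̄_j, 0), min(J̲_j, 0)}, and define ζ_m(z, ẑ) coordinatewise by ζ_{m,j}(z, ẑ) = ẑ_j if m_j = max(J̄_j, 0) and ζ_{m,j}(z, ẑ) = z_j if m_j = min(J̲_j, 0). Define f_d(z, ẑ; m) := ⟨m, ζ_m(ẑ, z)⟩ + f(ζ_m(z, ẑ)) − ⟨m, ζ_m(z,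 ẑ)⟩. Then for all z ∈ [z̲, z̄]: f_d(z̲, z̄; m) ≤ f(z) ≤ f_d(z̄, z̲; m). -/
/-!
With `g := f - ⟨m, ·⟩`, the choice of `m` makes every partial derivative of `g` sign-stable on the
box: `∂ⱼ g ≤ 0` where `m j = max (J̄ j) 0` and `∂ⱼ g ≥ 0` where `m j = min (J̲ j) 0`. By the mean
value theorem `g` therefore lies between its values at the two opposite corners `ζ_m(z̲, z̄)` and
`ζ_m(z̄, z̲)`, while the linear part `⟨m, ·⟩`, whose coefficients have the opposite signs, is
monotone the other way round; adding the two bounds gives `f_d`.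
-/

open Set

variable {ι : Type*}

/-- The corner map `ζ_m(z, ẑ)`, with `ẑ` written `z'`; `cs j` records that `m j = max (J̄ j) 0`
rather than `min (J̲ j) 0`. -/
def selectCorner (cs : ι → Bool) (z z' : ι → ℝ) : ι → ℝ := fun j => if cs j then z' j else z j

/-- The remainder-form decomposition function `f_d(z, ẑ; m)`. -/
def remainderDecomp [Fintype ι] (f : (ι → ℝ) → ℝ) (m : ι → ℝ) (cs : ι → Bool)
    (z z' : ι → ℝ) : ℝ :=
  m ⬝ᵥ selectCorner cs z' z + f (selectCorner cs z z') - m ⬝ᵥ selectCorner cs z z'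

theorem selectCorner_mem_Icc {a b z z' : ι → ℝ} (cs : ι → Bool) (hz : z ∈ Icc a b)
    (hz' : z' ∈ Icc a b) : selectCorner cs z z' ∈ Icc a b := by
  constructor <;> intro j <;> unfold selectCorner <;> split
  exacts [hz'.1 j, hz.1 j, hz'.2 j, hz.2 j]

theorem mul_sub_selectCorner_nonneg {a b z : ι → ℝ} {cs : ι → Bool} {j : ι} {t : ℝ}
    (hz : z ∈ Icc a b) (ht : (cs j = true → t ≤ 0) ∧ (cs j = false → 0 ≤ t)) :
    0 ≤ t * (z j - selectCorner cs a b j) ∧ 0 ≤ t * (selectCorner cs b a j - z j) := by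
  have ha := hz.1 j
  have hb := hz.2 j
  unfold selectCorner
  cases hc : cs j
  · have := ht.2 hc
    simp only [Bool.false_eq_true, if_false]
    exact ⟨mul_nonneg this (by linarith), mul_nonneg this (by linarith)⟩
  · have := ht.1 hc
    simp only [if_true]
    exact ⟨mul_nonneg_of_nonpos_of_nonpos this (by linarith),
      mul_nonneg_of_nonpos_of_nonpos this (by linarith)⟩

theorem ContinuousLinearMap.apply_eq_sum_mul_single [Fintype ι] [DecidableEq ι]
    (L : (ι → ℝ) →L[ℝ] ℝ) (v : ι → ℝ) : L v = ∑ j, v j * L (Pi.single j 1) := by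
  conv_lhs => rw [pi_eq_sum_univ' v]
  simp only [map_sum, map_smul, smul_eq_mul]

theorem Convex.dotProduct_sub_le_sub_of_partials [Fintype ι] [DecidableEq ι] {s : Set (ι → ℝ)}
    (hs : Convex ℝ s) {g : (ι → ℝ) → ℝ} (hg : ∀ w ∈ s, DifferentiableAt ℝ g w) {x y : ι → ℝ}
    (hx : x ∈ s) (hy : y ∈ s) (m : ι → ℝ)
    (hpartial : ∀ w ∈ s, ∀ j, 0 ≤ (fderiv ℝ g w (Pi.single j 1) - m j) * (y j - x j)) :
    m ⬝ᵥ (y - x) ≤ g y - g x := by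
  obtain ⟨w, hw, hmvt⟩ := domain_mvt (fun w hw => (hg w hw).hasFDerivAt.hasFDerivWithinAt)
    hs hx hy
  rw [hmvt, ContinuousLinearMap.apply_eq_sum_mul_single]
  refine Finset.sum_le_sum fun j _ => ?_
  have := hpartial w (hs.segment_subset hx hy hw) j
  simp only [Pi.sub_apply] at this ⊢
  linarith

theorem remainderDecomp_le_and_le_remainderDecomp [Fintype ι] [DecidableEq ι] {a b : ι → ℝ}
    {f : (ι → ℝ) → ℝ} (hdiff : ∀ w ∈ Icc a b, DifferentiableAt ℝ f w) {m : ι → ℝ}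
    {cs : ι → Bool}
    (hgrad : ∀ w ∈ Icc a b, ∀ j, (cs j = true → fderiv ℝ f w (Pi.single j 1) ≤ m j) ∧
      (cs j = false → m j ≤ fderiv ℝ f w (Pi.single j 1)))
    (hm : ∀ j, (cs j = true → 0 ≤ m j) ∧ (cs j = false → m j ≤ 0)) {z : ι → ℝ}
    (hz : z ∈ Icc a b) :
    remainderDecomp f m cs a b ≤ f z ∧ f z ≤ remainderDecomp f m cs b a := by
  have hab : a ≤ b := hz.1.trans hz.2
  have hlo : selectCorner cs a b ∈ Icc a b :=
    selectCorner_mem_Icc cs (left_mem_Icc.2 hab) (right_mem_Icc.2 hab)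
  have hhi : selectCorner cs b a ∈ Icc a b :=
    selectCorner_mem_Icc cs (right_mem_Icc.2 hab) (left_mem_Icc.2 hab)
  have hgrad_sub (w) (hw : w ∈ Icc a b) (j) :=
    mul_sub_selectCorner_nonneg (t := fderiv ℝ f w (Pi.single j 1) - m j) hz
      ⟨fun hc => sub_nonpos.2 ((hgrad w hw j).1 hc),
        fun hc => sub_nonneg.2 ((hgrad w hw j).2 hc)⟩
  have hm_sub (j) :=
    mul_sub_selectCorner_nonneg (t := -m j) hz
      ⟨fun hc => neg_nonpos.2 ((hm j).1 hc), fun hc => neg_nonneg.2 ((hm j).2 hc)⟩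
  have hf_lo := (convex_Icc a b).dotProduct_sub_le_sub_of_partials hdiff hlo hz m
    fun w hw j => (hgrad_sub w hw j).1
  have hf_hi := (convex_Icc a b).dotProduct_sub_le_sub_of_partials hdiff hz hhi m
    fun w hw j => (hgrad_sub w hw j).2
  have hm_lo : m ⬝ᵥ selectCorner cs b a ≤ m ⬝ᵥ z :=
    Finset.sum_le_sum fun j _ => by linarith [(hm_sub j).2]
  have hm_hi : m ⬝ᵥ z ≤ m ⬝ᵥ selectCorner cs a b :=
    Finset.sum_le_sum fun j _ => by linarith [(hm_sub j).1]
  rw [dotProduct_sub] at hf_lo hf_hi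
  unfold remainderDecomp
  constructor <;> linarith

theorem remainder_form_decomposition_valid_general (n : ℕ) (zlo zhi : Fin n → ℝ)
    (f : (Fin n → ℝ) → ℝ) (Jlo Jhi : Fin n → ℝ)
    (hdiff : ∀ z ∈ Set.Icc zlo zhi, DifferentiableAt ℝ f z)
    (hgrad : ∀ z ∈ Set.Icc zlo zhi, ∀ j,
      Jlo j ≤ fderiv ℝ f z (Pi.single j 1) ∧ fderiv ℝ f z (Pi.single j 1) ≤ Jhi j)
    (m : Fin n → ℝ) (cs : Fin n → Bool)
    (hm : ∀ j, (cs j = true → m j = max (Jhi j) 0) ∧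
               (cs j = false → m j = min (Jlo j) 0)) :
    ∀ z ∈ Set.Icc zlo zhi,
      -- f_d(z̲, z̄; m) ≤ f(z), where ζ_m(z̲, z̄) selects ẑ=z̄ on `true` coordinates
      ((∑ j, m j * (fun j => if cs j then zlo j else zhi j) j)
        + f (fun j => if cs j then zhi j else zlo j)
        - ∑ j, m j * (fun j => if cs j then zhi j else zlo j) j ≤ f z) ∧
      (f z ≤ (∑ j, m j * (fun j => if cs j then zhi j else zlo j) j)
        + f (fun j => if cs j then zlo j else zhi j)
        - ∑ j, m j * (fun j => if cs j then zlo j else zhi j) j) := by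
  intro z hz
  refine remainderDecomp_le_and_le_remainderDecomp hdiff
    (fun w hw j => ⟨fun hc => ?_, fun hc => ?_⟩) (fun j => ⟨fun hc => ?_, fun hc => ?_⟩) hz
  · rw [(hm j).1 hc]; exact (hgrad w hw j).2.trans (le_max_left _ _)
  · rw [(hm j).2 hc]; exact (min_le_left _ _).trans (hgrad w hw j).1
  · rw [(hm j).1 hc]; exact le_max_right _ _
  · rw [(hm j).2 hc]; exact min_le_right _ _

/-- one-dimensional remainder-form decomposition functions give
valid bounds: f_d(z̲, z̄; m) ≤ f(z) ≤ f_d(z̄, z̲; m) on the box. -/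
theorem remainder_form_decomposition_valid (n : ℕ) (zlo zhi : Fin n → ℝ)
    (hbox : zlo ≤ zhi) (f : (Fin n → ℝ) → ℝ) (Jlo Jhi : Fin n → ℝ)
    (hdiff : ∀ z ∈ Set.Icc zlo zhi, DifferentiableAt ℝ f z)
    (hgrad : ∀ z ∈ Set.Icc zlo zhi, ∀ j,
      Jlo j ≤ fderiv ℝ f z (Pi.single j 1) ∧ fderiv ℝ f z (Pi.single j 1) ≤ Jhi j)
    (m : Fin n → ℝ) (cs : Fin n → Bool)
    (hm : ∀ j, (cs j = true → m j = max (Jhi j) 0) ∧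
               (cs j = false → m j = min (Jlo j) 0)) :
    ∀ z ∈ Set.Icc zlo zhi,
      -- f_d(z̲, z̄; m) ≤ f(z), where ζ_m(z̲, z̄) selects ẑ=z̄ on `true` coordinates
      ((∑ j, m j * (fun j => if cs j then zlo j else zhi j) j)
        + f (fun j => if cs j then zhi j else zlo j)
        - ∑ j, m j * (fun j => if cs j then zhi j else zlo j) j ≤ f z) ∧
      (f z ≤ (∑ j, m j * (fun j => if cs j then zhi j else zlo j) j)
        + f (fun j => if cs j then zlo j else zhi j)
        - ∑ j, m j * (fun j => if cs j then zlo j else zhi j) j) :=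
  remainder_form_decomposition_valid_general n zlo zhi f Jlo Jhi hdiff hgrad m cs hm
end
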